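/- arXiv:1708.08320 — 2 statements merged into one kernel-verified Lean document; each statement's English description precedes it below -/
import Mathlib

section
/- For the triangular pulse g with ∫_0^T g² = 1 and any nonzero real θ, the quantity ∫_0^T g(t)² exp(i·θ·P·g(t)²) dt tends to 0 as P → ∞, while for θ = 0 it equals 1 for all P. -/
open MeasureTheory intervalIntegral Filter Complex

/-! The pulse is √(12/T³) times the tent map, which is symmetric about `T/2` and equals `t` on
`[0, T/2]`. Hence the integral is twice a chirp integral `∫₀^{T/2} t² e^{iλt²} dt`, and the
substitution `u = t²` turns this into the Fourier transform of the integrable function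
`√u / 2` on `(0, T²/4]`, evaluated at a frequency proportional to `θP`. The Riemann–Lebesgue
lemma makes it vanish as `P → ∞` whenever `θ ≠ 0`. -/

theorem tendsto_integral_exp_mul_I_smul_cocompact {E : Type*} [NormedAddCommGroup E]
    [NormedSpace ℂ E] (ψ : ℝ → E) :
    Tendsto (fun s : ℝ => ∫ u : ℝ, exp (s * u * I) • ψ u) (cocompact ℝ) (nhds 0) := by
  have hπ : -(2 * Real.pi)⁻¹ ≠ 0 := by simp [Real.pi_ne_zero]
  convert (Real.tendsto_integral_exp_smul_cocompact ψ).comp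
    (tendsto_cocompact_mul_left₀ hπ) using 2 with s
  refine integral_congr_ae (Eventually.of_forall fun u => ?_)
  dsimp only
  rw [Circle.smul_def, Real.fourierChar_apply]
  congr 2
  push_cast
  field_simp

noncomputable def tent (T t : ℝ) : ℝ := T / 2 - |T / 2 - t|

theorem tent_sub_left (T t : ℝ) : tent T (T - t) = tent T t := by
  rw [tent, tent, show T / 2 - (T - t) = -(T / 2 - t) by ring, abs_neg]

theorem tent_of_le_half {T t : ℝ} (ht : t ≤ T / 2) : tent T t = t := by
  rw [tent, abs_of_nonneg (sub_nonneg.mpr ht)]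
  ring

theorem continuous_tent (T : ℝ) : Continuous (tent T) := by
  unfold tent; fun_prop

theorem integral_comp_tent {E : Type*} [NormedAddCommGroup E] [NormedSpace ℝ E]
    {T : ℝ} (hT : 0 ≤ T) {H : ℝ → E} (hH : Continuous H) :
    ∫ t in (0:ℝ)..T, H (tent T t) = 2 • ∫ t in (0:ℝ)..T / 2, H t := by
  have hc : Continuous fun t => H (tent T t) := hH.comp (continuous_tent T)
  have hfirst : ∫ t in (0:ℝ)..T / 2, H (tent T t) = ∫ t in (0:ℝ)..T / 2, H t :=
    integral_congr fun t ht => by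
      rw [Set.uIcc_of_le (by linarith)] at ht
      rw [tent_of_le_half ht.2]
  have hsecond : ∫ t in T / 2..T, H (tent T t) = ∫ t in (0:ℝ)..T / 2, H (tent T t) := by
    have := integral_comp_sub_left (fun t => H (tent T t)) T (a := 0) (b := T / 2)
    simp only [tent_sub_left] at this
    rw [this, sub_zero, sub_half]
  rw [← integral_add_adjacent_intervals (hc.intervalIntegrable 0 (T / 2))
    (hc.intervalIntegrable _ _), hsecond, hfirst, two_smul]

noncomputable def chirpDensity (a : ℝ) : ℝ → ℂ :=
  (Set.Ioc 0 (a ^ 2)).indicator fun u => ((√u / 2 : ℝ) : ℂ)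

theorem integral_sq_mul_exp_eq_integral_exp_smul {a : ℝ} (ha : 0 ≤ a) (s : ℝ) :
    ∫ t in (0:ℝ)..a, (t ^ 2 : ℂ) * exp (s * t ^ 2 * I) =
      ∫ u : ℝ, exp (s * u * I) • chirpDensity a u := by
  set G : ℝ → ℂ := fun u => exp (s * u * I) * ((√u / 2 : ℝ) : ℂ)
  have hsubst : ∫ t in (0:ℝ)..a, (2 * t) • G (t ^ 2) = ∫ u in (0:ℝ)..a ^ 2, G u := by
    have := integral_deriv_smul_comp (f := fun t : ℝ => t ^ 2) (f' := fun t => 2 * t)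
      (g := G) (a := 0) (b := a) (fun t _ => by simpa using hasDerivAt_pow 2 t) (by fun_prop)
      (by fun_prop)
    rwa [zero_pow two_ne_zero] at this
  have hchirp : ∫ t in (0:ℝ)..a, (t ^ 2 : ℂ) * exp (s * t ^ 2 * I) =
      ∫ t in (0:ℝ)..a, (2 * t) • G (t ^ 2) :=
    integral_congr fun t ht => by
      rw [Set.uIcc_of_le ha] at ht
      simp only [G, Real.sqrt_sq ht.1, real_smul]
      push_cast
      ring
  rw [hchirp, hsubst, integral_of_le (by positivity),
    ← MeasureTheory.integral_indicator measurableSet_Ioc]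
  refine integral_congr_ae (Eventually.of_forall fun u => ?_)
  by_cases hu : u ∈ Set.Ioc 0 (a ^ 2) <;> simp [chirpDensity, hu, G]

theorem integral_tent_pulse_eq_integral_exp_smul {T : ℝ} (hT : 0 ≤ T) (A θ P : ℝ) :
    ∫ t in (0:ℝ)..T, ((A * tent T t : ℝ) : ℂ) ^ 2 *
        exp (I * θ * P * (((A * tent T t) ^ 2 : ℝ) : ℂ)) =
      2 * A ^ 2 * ∫ u : ℝ, exp ((θ * A ^ 2 * P : ℝ) * u * I) •
        chirpDensity (T / 2) u := by
  have hpulse : ∀ x : ℝ, ((A * x : ℝ) : ℂ) ^ 2 * exp (I * θ * P * (((A * x) ^ 2 : ℝ) : ℂ)) =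
      A ^ 2 * ((x : ℂ) ^ 2 * exp (((θ * A ^ 2 * P : ℝ) : ℂ) * x ^ 2 * I)) := fun x => by
    push_cast
    ring_nf
  simp only [hpulse]
  rw [intervalIntegral.integral_const_mul, integral_comp_tent hT
    (H := fun x : ℝ => (x : ℂ) ^ 2 * exp (((θ * A ^ 2 * P : ℝ) : ℂ) * x ^ 2 * I)) (by fun_prop),
    integral_sq_mul_exp_eq_integral_exp_smul (by positivity), nsmul_eq_mul, Nat.cast_ofNat]
  ring

theorem stmt6 (T : ℝ) (hT : 0 < T) (g : ℝ → ℝ)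
    (hg : ∀ t, g t = Real.sqrt (12 / T ^ 3) * (T / 2 - |T / 2 - t|))
    (hE : ∫ t in (0:ℝ)..T, (g t) ^ 2 = 1) :
    (∀ θ : ℝ, θ ≠ 0 →
      Tendsto (fun P : ℝ =>
          ∫ t in (0:ℝ)..T, ((g t : ℝ) : ℂ) ^ 2 *
            Complex.exp (Complex.I * (θ : ℂ) * (P : ℂ) * ((g t) ^ 2 : ℝ)))
        atTop (nhds 0)) ∧
    (∀ P : ℝ,
      ∫ t in (0:ℝ)..T, ((g t : ℝ) : ℂ) ^ 2 *
          Complex.exp (Complex.I * ((0:ℝ) : ℂ) * (P : ℂ) * ((g t) ^ 2 : ℝ)) = 1) := by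
  obtain rfl : g = fun t => √(12 / T ^ 3) * tent T t := funext hg
  refine ⟨fun θ hθ => ?_, fun P => ?_⟩
  · have hA : √(12 / T ^ 3) ^ 2 ≠ 0 := by positivity
    have hfreq : Tendsto (fun P => θ * √(12 / T ^ 3) ^ 2 * P) atTop (cocompact ℝ) :=
      (tendsto_cocompact_mul_left₀ (mul_ne_zero hθ hA)).comp
        (tendsto_id.mono_left atTop_le_cocompact)
    simp only [integral_tent_pulse_eq_integral_exp_smul hT.le]
    have hRL := ((tendsto_integral_exp_mul_I_smul_cocompact (chirpDensity (T / 2))).comp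
      hfreq).const_mul (2 * ((√(12 / T ^ 3) : ℝ) : ℂ) ^ 2)
    rwa [mul_zero] at hRL
  · simp only [ofReal_zero, mul_zero, zero_mul, exp_zero, mul_one, ← ofReal_pow]
    rw [intervalIntegral.integral_ofReal, hE, ofReal_one]
end

section
/- Under triangular pulse shaping, the noiseless MFS demodulator output for input x₁ = √P·x₁' with interference phase parameter s = P·s' (s' ≠ 0 fixed) tends to 0 as P → ∞: namely √P·x₁'·2c²·∫_0^{T/2} t² exp(i·η·c²·P·s'·t²) dt → 0. -/
open intervalIntegral Filter

/-!
With `v t = exp (i λ t²)` one has `λ t² v t = (-i t / 2) · v' t`, so an integration by parts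
bounds `λ ∫₀ᵇ t² exp (i λ t²) dt` by `|b|` uniformly in `λ`. With `λ = η c² P s'` the
demodulator output is therefore `O(1 / √P)`.
-/

lemma norm_ofReal_mul_integral_sq_mul_exp_I_mul_sq_le (lam b : ℝ) :
    ‖(lam : ℂ) * ∫ t in (0:ℝ)..b, (t : ℂ) ^ 2 * Complex.exp (Complex.I * lam * t ^ 2)‖ ≤ |b| := by
  set v : ℝ → ℂ := fun t => Complex.exp (Complex.I * lam * t ^ 2)
  have hv : ∀ t : ℝ, HasDerivAt v (2 * Complex.I * lam * t * v t) t := fun t => by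
    have := (((hasDerivAt_pow 2 (t : ℂ)).comp_ofReal).const_mul (Complex.I * lam)).cexp
    convert this using 1
    simp only [v]
    ring
  have hu : ∀ t : ℝ, HasDerivAt (fun t : ℝ => -Complex.I * t / 2) (-Complex.I / 2) t := fun t => by
    simpa using ((hasDerivAt_id t).ofReal_comp.const_mul (-Complex.I)).div_const 2
  have hnorm_v : ∀ t, ‖v t‖ = 1 := fun t => by
    simp [v, ← Complex.ofReal_pow, mul_assoc, ← Complex.ofReal_mul]
  have hibp : (lam : ℂ) * ∫ t in (0:ℝ)..b, (t : ℂ) ^ 2 * v t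
      = -Complex.I * b / 2 * v b - ∫ t in (0:ℝ)..b, -Complex.I / 2 * v t := by
    have hintegrand : ∀ t : ℝ, (lam : ℂ) * ((t : ℂ) ^ 2 * v t)
        = -Complex.I * t / 2 * (2 * Complex.I * lam * t * v t) := fun t => by
      linear_combination (lam : ℂ) * t ^ 2 * v t * Complex.I_sq
    rw [← integral_const_mul]
    simp only [hintegrand]
    rw [integral_mul_deriv_eq_deriv_mul (fun t _ => hu t) (fun t _ => hv t) intervalIntegrable_const
      ((by fun_prop : Continuous fun t : ℝ => 2 * Complex.I * lam * t * v t).intervalIntegrable _ _)]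
    simp
  have hboundary : ‖-Complex.I * b / 2 * v b‖ = |b| / 2 := by
    simp [hnorm_v]
  have hremainder : ‖∫ t in (0:ℝ)..b, -Complex.I / 2 * v t‖ ≤ |b| / 2 := by
    have := norm_integral_le_of_norm_le_const (a := 0) (b := b) (C := 1 / 2)
      (f := fun t => -Complex.I / 2 * v t) fun t _ => by simp [hnorm_v]
    simpa [div_eq_inv_mul] using this
  change ‖(lam : ℂ) * ∫ t in (0:ℝ)..b, (t : ℂ) ^ 2 * v t‖ ≤ |b|
  rw [hibp]
  linarith [norm_sub_le (-Complex.I * b / 2 * v b) (∫ t in (0:ℝ)..b, -Complex.I / 2 * v t)]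

lemma tendsto_sqrt_mul_integral_sq_mul_exp_I_mul_sq_atTop (η s' c b : ℝ) (hη : η ≠ 0)
    (hs : s' ≠ 0) (x : ℂ) :
    Tendsto (fun P : ℝ => (Real.sqrt P : ℂ) * x * (2 * (c : ℂ) ^ 2) *
        ∫ t in (0:ℝ)..b, (t : ℂ) ^ 2 *
          Complex.exp (Complex.I * η * (c : ℂ) ^ 2 * P * s' * t ^ 2))
      atTop (nhds 0) := by
  have hηs : 0 < |η * s'| := abs_pos.2 (mul_ne_zero hη hs)
  refine squeeze_zero_norm' ?_
    (tendsto_const_nhds.div_atTop Real.tendsto_sqrt_atTop :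
      Tendsto (fun P => 2 * ‖x‖ * |b| / |η * s'| / Real.sqrt P) atTop (nhds 0))
  filter_upwards [eventually_gt_atTop 0] with P hP
  set J := ∫ t in (0:ℝ)..b, (t : ℂ) ^ 2 *
    Complex.exp (Complex.I * η * (c : ℂ) ^ 2 * P * s' * t ^ 2)
  have hJ : |η * s'| * (c ^ 2 * P * ‖J‖) ≤ |b| := by
    have hphase : ∀ t : ℝ, Complex.I * η * (c : ℂ) ^ 2 * P * s' * t ^ 2
        = Complex.I * ((η * c ^ 2 * P * s' : ℝ) : ℂ) * t ^ 2 := fun t => by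
      push_cast
      ring
    have := norm_ofReal_mul_integral_sq_mul_exp_I_mul_sq_le (η * c ^ 2 * P * s') b
    simp only [← hphase] at this
    calc |η * s'| * (c ^ 2 * P * ‖J‖) = ‖((η * c ^ 2 * P * s' : ℝ) : ℂ) * J‖ := by
          rw [norm_mul, Complex.norm_real, Real.norm_eq_abs, abs_mul, abs_mul, abs_mul,
            abs_mul, abs_of_nonneg (sq_nonneg c), abs_of_pos hP]
          ring
      _ ≤ |b| := this
  have hsqrtP : 0 < Real.sqrt P := Real.sqrt_pos.2 hP
  calc ‖(Real.sqrt P : ℂ) * x * (2 * (c : ℂ) ^ 2) * J‖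
      = 2 * ‖x‖ / (|η * s'| * Real.sqrt P) * (|η * s'| * (c ^ 2 * P * ‖J‖)) := by
        have hnorm : ‖2 * (c : ℂ) ^ 2‖ = 2 * c ^ 2 := by simp
        rw [norm_mul, norm_mul, norm_mul, Complex.norm_real, Real.norm_of_nonneg hsqrtP.le, hnorm]
        field_simp
        rw [Real.sq_sqrt hP.le]
        ring
    _ ≤ 2 * ‖x‖ / (|η * s'| * Real.sqrt P) * |b| := by gcongr
    _ = 2 * ‖x‖ * |b| / |η * s'| / Real.sqrt P := by field_simp

theorem stmt19_general (T η s' : ℝ) (hη : 0 < η) (hs : 0 < s') (x₁' : ℂ) :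
    Tendsto (fun P : ℝ =>
        (Real.sqrt P : ℂ) * x₁' * (2 * ((Real.sqrt (12 / T ^ 3) : ℝ) : ℂ) ^ 2) *
          ∫ t in (0:ℝ)..(T / 2), (t : ℂ) ^ 2 *
            Complex.exp (Complex.I * (η : ℂ) * ((Real.sqrt (12 / T ^ 3) : ℝ) : ℂ) ^ 2 *
              (P : ℂ) * (s' : ℂ) * (t : ℂ) ^ 2))
      atTop (nhds 0) :=
  tendsto_sqrt_mul_integral_sq_mul_exp_I_mul_sq_atTop η s' _ _ hη.ne' hs.ne' x₁'

theorem stmt19 (T η s' : ℝ) (hT : 0 < T) (hη : 0 < η) (hs : 0 < s') (x₁' : ℂ) :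
    Tendsto (fun P : ℝ =>
        (Real.sqrt P : ℂ) * x₁' * (2 * ((Real.sqrt (12 / T ^ 3) : ℝ) : ℂ) ^ 2) *
          ∫ t in (0:ℝ)..(T / 2), (t : ℂ) ^ 2 *
            Complex.exp (Complex.I * (η : ℂ) * ((Real.sqrt (12 / T ^ 3) : ℝ) : ℂ) ^ 2 *
              (P : ℂ) * (s' : ℂ) * (t : ℂ) ^ 2))
      atTop (nhds 0) :=
  stmt19_general T η s' hη hs x₁'
end
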